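/- arXiv:2306.02822 — 5 statements merged into one kernel-verified Lean document; each statement's English description precedes it below -/
import Mathlib

section
/- A nonnegative matrix W ∈ ℝ^{d×d} satisfies tr(e^{W}) = d if and only if W has no cycles, i.e., (W^k)_{ii} = 0 for all i and all k ≥ 1. -/
open Matrix

private lemma pow_entry_nonneg {d : ℕ} (W : Matrix (Fin d) (Fin d) ℝ)
    (hW : ∀ i j, 0 ≤ W i j) (k : ℕ) : ∀ i j, 0 ≤ (W ^ k) i j := by
  induction k with
  | zero =>
    intro i j
    simp [Matrix.one_apply]
    split <;> norm_num
  | succ n ih =>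
    intro i j
    rw [pow_succ, Matrix.mul_apply]
    exact Finset.sum_nonneg fun l _ => mul_nonneg (ih i l) (hW l j)

theorem trace_exp_eq_card_iff_no_cycles {d : ℕ} (W : Matrix (Fin d) (Fin d) ℝ)
    (hW : ∀ i j, 0 ≤ W i j) :
    (NormedSpace.exp W).trace = (d : ℝ) ↔
      ∀ (i : Fin d) (k : ℕ), 1 ≤ k → (W ^ k) i i = 0 := by
  letI : SeminormedRing (Matrix (Fin d) (Fin d) ℝ) := Matrix.linftyOpSemiNormedRing
  letI : NormedRing (Matrix (Fin d) (Fin d) ℝ) := Matrix.linftyOpNormedRing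
  letI : NormedAlgebra ℝ (Matrix (Fin d) (Fin d) ℝ) := Matrix.linftyOpNormedAlgebra
  have hsum : Summable fun n : ℕ => ((n.factorial : ℝ)⁻¹) • W ^ n :=
    NormedSpace.expSeries_summable' (𝕂 := ℝ) W
  -- trace as a continuous linear map
  let T : Matrix (Fin d) (Fin d) ℝ →L[ℝ] ℝ :=
    LinearMap.toContinuousLinearMap (Matrix.traceLinearMap (Fin d) ℝ ℝ)
  have hT : ∀ M : Matrix (Fin d) (Fin d) ℝ, T M = M.trace := fun M => rfl
  have hexp : (NormedSpace.exp W).trace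
      = ∑' n : ℕ, ((n.factorial : ℝ)⁻¹) • (W ^ n).trace := by
    rw [← hT, NormedSpace.exp_eq_tsum ℝ, T.map_tsum hsum]
    simp [hT, Matrix.trace_smul]
  set f : ℕ → ℝ := fun n => ((n.factorial : ℝ)⁻¹) • (W ^ n).trace with hf
  have hfsum : Summable f := by
    have := T.map_tsum (f := fun n : ℕ => ((n.factorial : ℝ)⁻¹) • W ^ n) hsum
    exact (hsum.map T T.continuous).congr (by intro n; simp [hf, hT, Matrix.trace_smul])
  have hf0 : f 0 = (d : ℝ) := by
    simp [hf, Matrix.trace_one]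
  have hfnonneg : ∀ n, 0 ≤ f n := by
    intro n
    apply smul_nonneg (by positivity)
    exact Finset.sum_nonneg fun i _ => pow_entry_nonneg W hW n i i
  have hsplit : (NormedSpace.exp W).trace = (d : ℝ) + ∑' n : ℕ, f (n + 1) := by
    rw [hexp, ← hf0]
    exact Summable.tsum_eq_zero_add hfsum
  have hfsum1 : Summable fun n : ℕ => f (n + 1) :=
    (summable_nat_add_iff 1).mpr hfsum
  rw [hsplit]
  constructor
  · intro h i k hk
    have htail : ∑' n : ℕ, f (n + 1) = 0 := by linarith
    have hall : ∀ n, f (n + 1) = 0 := by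
      intro n
      have hle : f (n + 1) ≤ 0 := htail ▸ Summable.le_tsum hfsum1 n (fun m _ => hfnonneg _)
      linarith [hfnonneg (n + 1)]
    obtain ⟨m, rfl⟩ := Nat.exists_eq_add_of_le hk
    rw [Nat.add_comm 1 m]
    have := hall m
    have htr : (W ^ (m + 1)).trace = 0 := by
      have hne : ((1 + m).factorial : ℝ)⁻¹ ≠ 0 := by positivity
      have := this
      simp only [hf, smul_eq_mul, Nat.add_comm] at this
      rcases mul_eq_zero.mp this with h' | h'
      · exact absurd h' (by positivity)
      · exact h'
    have := (Finset.sum_eq_zero_iff_of_nonneg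
      (fun j _ => pow_entry_nonneg W hW (m + 1) j j)).mp htr i (Finset.mem_univ i)
    exact this
  · intro h
    have : ∀ n : ℕ, f (n + 1) = 0 := by
      intro n
      have htr : (W ^ (n + 1)).trace = 0 :=
        Finset.sum_eq_zero fun i _ => h i (n + 1) (Nat.le_add_left 1 n)
      simp [hf, htr]
    simp [tsum_congr this]
end

section
/- For a nonnegative matrix A ∈ ℝ^{d×d} and any α > 0, tr((I + αA)^d) = d if and only if tr(A^k) = 0 for all 1 ≤ k ≤ d. -/
open Matrix

lemma entries_pow_nonneg' {d : ℕ} (A : Matrix (Fin d) (Fin d) ℝ)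
    (hA : ∀ i j, 0 ≤ A i j) (k : ℕ) : ∀ i j, 0 ≤ (A ^ k) i j := by
  induction k with
  | zero =>
    intro i j
    simp only [pow_zero, Matrix.one_apply]
    split <;> norm_num
  | succ n ih =>
    intro i j
    rw [pow_succ, Matrix.mul_apply]
    exact Finset.sum_nonneg fun l _ => mul_nonneg (ih i l) (hA l j)

theorem trace_pow_one_add_smul_eq_card_iff {d : ℕ} (A : Matrix (Fin d) (Fin d) ℝ)
    (hA : ∀ i j, 0 ≤ A i j) (α : ℝ) (hα : 0 < α) :
    ((1 + α • A) ^ d).trace = (d : ℝ) ↔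
      ∀ k : ℕ, 1 ≤ k → k ≤ d → (A ^ k).trace = 0 := by
  have htr : ∀ k, 0 ≤ (A ^ k).trace := fun k =>
    Finset.sum_nonneg fun i _ => entries_pow_nonneg' A hA k i i
  have expand : ((1 + α • A) ^ d).trace
      = (∑ m ∈ Finset.range d,
          (d.choose m : ℝ) * (α ^ (d - m) * (A ^ (d - m)).trace)) + d := by
    rw [(Commute.one_left (α • A)).add_pow, trace_sum, Finset.sum_range_succ]
    congr 1
    · apply Finset.sum_congr rfl
      intro m hm
      rw [one_pow, one_mul, smul_pow, trace_mul_comm]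
      rw [← nsmul_eq_mul, Matrix.trace_smul, Matrix.trace_smul, smul_eq_mul]
      ring
    · simp
  rw [expand]
  constructor
  · intro h k hk1 hkd
    have hsum : ∑ m ∈ Finset.range d,
        (d.choose m : ℝ) * (α ^ (d - m) * (A ^ (d - m)).trace) = 0 := by linarith
    have hzero := (Finset.sum_eq_zero_iff_of_nonneg (fun m hm =>
      mul_nonneg (by positivity) (mul_nonneg (by positivity) (htr _)))).mp hsum
    have hmem : d - k ∈ Finset.range d := by
      simp only [Finset.mem_range]; omega
    have := hzero (d - k) hmem
    have hdk : d - (d - k) = k := by omega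
    rw [hdk] at this
    have hc : (0:ℝ) < (d.choose (d - k) : ℝ) := by
      exact_mod_cast Nat.choose_pos (by omega)
    have hαk : (0:ℝ) < α ^ k := by positivity
    rcases mul_eq_zero.mp this with h1 | h1
    · exact absurd h1 (ne_of_gt hc)
    · rcases mul_eq_zero.mp h1 with h2 | h2
      · exact absurd h2 (ne_of_gt hαk)
      · exact h2
  · intro h
    have : ∑ m ∈ Finset.range d,
        (d.choose m : ℝ) * (α ^ (d - m) * (A ^ (d - m)).trace) = 0 := by
      apply Finset.sum_eq_zero
      intro m hm
      have hm' := Finset.mem_range.mp hm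
      rw [h (d - m) (by omega) (by omega)]
      ring
    rw [this, zero_add]
end

section
/- Let A ∈ {0,1}^{d×d} be the adjacency matrix of a directed graph G on d vertices. Then G is acyclic if and only if tr((I + A)^d) = d. -/
open Matrix

theorem acyclic_iff_trace_pow_one_add_eq_card {d : ℕ} (A : Matrix (Fin d) (Fin d) ℝ)
    (hA : ∀ i j, A i j = 0 ∨ A i j = 1) :
    (∀ (i : Fin d) (k : ℕ), 1 ≤ k → k ≤ d → (A ^ k) i i = 0) ↔
      ((1 + A) ^ d).trace = (d : ℝ) := by
  have hA0 : ∀ i j, 0 ≤ A i j := fun i j => by rcases hA i j with h | h <;> simp [h]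
  have hpow : ∀ (k : ℕ) i j, 0 ≤ (A ^ k) i j := by
    intro k
    induction k with
    | zero => intro i j; by_cases h : i = j <;> simp [h, Matrix.one_apply]
    | succ n ih =>
      intro i j
      rw [pow_succ, Matrix.mul_apply]
      exact Finset.sum_nonneg fun l _ => mul_nonneg (ih i l) (hA0 l j)
  have htr : ∀ k : ℕ, 0 ≤ (A ^ k).trace :=
    fun k => Finset.sum_nonneg fun i _ => hpow k i i
  have hexp : ((1 + A) ^ d).trace
      = ∑ m ∈ Finset.range (d + 1), (d.choose m : ℝ) * (A ^ m).trace := by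
    rw [add_comm, (Commute.one_right A).add_pow, Matrix.trace_sum]
    refine Finset.sum_congr rfl fun m _ => ?_
    rw [one_pow, mul_one, ← nsmul_eq_mul']
    rw [show ((d.choose m) • (A ^ m)).trace = (d.choose m) • (A ^ m).trace from
      AddMonoidHom.map_nsmul (Matrix.traceAddMonoidHom (Fin d) ℝ) _ _]
    simp [nsmul_eq_mul]
  have htr1 : (1 : Matrix (Fin d) (Fin d) ℝ).trace = (d : ℝ) := by
    simp [Matrix.trace_one]
  constructor
  · intro h
    rw [hexp, Finset.sum_range_succ']
    have : ∑ m ∈ Finset.range d, (d.choose (m + 1) : ℝ) * (A ^ (m + 1)).trace = 0 := by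
      refine Finset.sum_eq_zero fun m hm => ?_
      have hmd : m + 1 ≤ d := Finset.mem_range.mp hm
      have : (A ^ (m + 1)).trace = 0 :=
        Finset.sum_eq_zero fun i _ => h i (m + 1) (Nat.succ_le_succ (Nat.zero_le m)) hmd
      simp [this]
    rw [this]
    simp [htr1]
  · intro h i k hk1 hkd
    rw [hexp, Finset.sum_range_succ'] at h
    simp [htr1] at h
    have hsum0 : ∑ m ∈ Finset.range d, (d.choose (m + 1) : ℝ) * (A ^ (m + 1)).trace = 0 := by
      linarith
    have hterm := (Finset.sum_eq_zero_iff_of_nonneg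
      (fun m _ => mul_nonneg (Nat.cast_nonneg _) (htr (m + 1)))).mp hsum0
    obtain ⟨m, rfl⟩ : ∃ m, k = m + 1 := ⟨k - 1, (Nat.succ_pred_eq_of_pos hk1).symm⟩
    have hm : m ∈ Finset.range d := Finset.mem_range.mpr (by omega)
    have hc : (0 : ℝ) < (d.choose (m + 1) : ℝ) := by
      exact_mod_cast Nat.choose_pos hkd
    have htr0 : (A ^ (m + 1)).trace = 0 := by
      have := hterm m hm
      rcases mul_eq_zero.mp this with h' | h'
      · exact absurd h' (ne_of_gt hc)
      · exact h'
    have := (Finset.sum_eq_zero_iff_of_nonneg fun j _ => hpow (m + 1) j j).mp htr0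
    exact this i (Finset.mem_univ i)
end

section
/- Let W ∈ ℝ^{d×d} and h(W) := tr(e^{W∘W}) − d, where ∘ is the Hadamard product. Then h(W) = 0 if and only if the directed graph G(W) with edge (i,j) whenever W_{ij} ≠ 0 is acyclic. -/
open Matrix

section notears_aux
variable {d : ℕ} (A : Matrix (Fin d) (Fin d) ℝ)

lemma notears_pow_entry_nonneg (hA : ∀ i j, 0 ≤ A i j) :
    ∀ k i j, 0 ≤ (A ^ k) i j := by
  intro k
  induction k with
  | zero => intro i j; simp [Matrix.one_apply]; split <;> norm_num
  | succ k ih =>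
    intro i j
    rw [pow_succ, Matrix.mul_apply]
    exact Finset.sum_nonneg fun l _ => mul_nonneg (ih i l) (hA l j)

lemma notears_pow_entry_ne_zero_path :
    ∀ k i j, (A ^ k) i j ≠ 0 →
      ∃ v : ℕ → Fin d, v 0 = i ∧ v k = j ∧ ∀ m < k, A (v m) (v (m + 1)) ≠ 0 := by
  intro k
  induction k with
  | zero =>
    intro i j h
    simp [Matrix.one_apply] at h
    by_cases hij : i = j
    · exact ⟨fun _ => i, rfl, hij, fun m hm => absurd hm (Nat.not_lt_zero m)⟩
    · simp [hij] at h
  | succ k ih =>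
    intro i j h
    rw [pow_succ', Matrix.mul_apply] at h
    obtain ⟨l, -, hl⟩ := Finset.exists_ne_zero_of_sum_ne_zero h
    have h1 : A i l ≠ 0 := left_ne_zero_of_mul hl
    have h2 : (A ^ k) l j ≠ 0 := right_ne_zero_of_mul hl
    obtain ⟨v, hv0, hvk, hve⟩ := ih l j h2
    refine ⟨fun m => if m = 0 then i else v (m - 1), by simp, by simp [hvk], ?_⟩
    intro m hm
    match m with
    | 0 => simpa [hv0] using h1
    | (n + 1) =>
      simp only [Nat.succ_ne_zero, if_false, Nat.add_sub_cancel]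
      exact hve n (by omega)

lemma notears_path_pow_pos (hA : ∀ i j, 0 ≤ A i j) :
    ∀ k (v : ℕ → Fin d), (∀ m < k, A (v m) (v (m + 1)) ≠ 0) →
      0 < (A ^ k) (v 0) (v k) := by
  intro k
  induction k with
  | zero => intro v _; simp [Matrix.one_apply]
  | succ k ih =>
    intro v hv
    have h1 : 0 < A (v 0) (v 1) :=
      lt_of_le_of_ne (hA _ _) (Ne.symm (hv 0 (Nat.succ_pos k)))
    have h2 : 0 < (A ^ k) (v 1) (v (k + 1)) := by
      have := ih (fun m => v (m + 1)) (fun m hm => hv (m + 1) (by omega))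
      simpa using this
    rw [pow_succ', Matrix.mul_apply]
    refine Finset.sum_pos' (fun l _ => mul_nonneg (hA _ _) (notears_pow_entry_nonneg A hA k l _)) ?_
    exact ⟨v 1, Finset.mem_univ _, mul_pos h1 h2⟩

end notears_aux

section notears_main
attribute [local instance] Matrix.linftyOpNormedRing Matrix.linftyOpNormedAlgebra

lemma notears_trace_exp {d : ℕ} (A : Matrix (Fin d) (Fin d) ℝ) :
    (NormedSpace.exp A).trace = ∑' n : ℕ, (n.factorial : ℝ)⁻¹ * (A ^ n).trace := by
  have hs : Summable (fun n : ℕ => ((n.factorial : ℝ))⁻¹ • A ^ n) :=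
    NormedSpace.expSeries_summable' A
  let T : Matrix (Fin d) (Fin d) ℝ →L[ℝ] ℝ :=
    LinearMap.toContinuousLinearMap (Matrix.traceLinearMap (Fin d) ℝ ℝ)
  have hexp : NormedSpace.exp A = ∑' n : ℕ, ((n.factorial : ℝ))⁻¹ • A ^ n :=
    congrFun (NormedSpace.exp_eq_tsum ℝ) A
  calc (NormedSpace.exp A).trace = T (∑' n : ℕ, ((n.factorial : ℝ))⁻¹ • A ^ n) := by
        rw [hexp]; rfl
    _ = ∑' n : ℕ, T (((n.factorial : ℝ))⁻¹ • A ^ n) := T.map_tsum hs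
    _ = ∑' n : ℕ, (n.factorial : ℝ)⁻¹ * (A ^ n).trace := by
        simp [T, Matrix.trace_smul, smul_eq_mul]

lemma notears_summable_trace {d : ℕ} (A : Matrix (Fin d) (Fin d) ℝ) :
    Summable (fun n : ℕ => (n.factorial : ℝ)⁻¹ * (A ^ n).trace) := by
  have hs : Summable (fun n : ℕ => ((n.factorial : ℝ))⁻¹ • A ^ n) :=
    NormedSpace.expSeries_summable' A
  let T : Matrix (Fin d) (Fin d) ℝ →L[ℝ] ℝ :=
    LinearMap.toContinuousLinearMap (Matrix.traceLinearMap (Fin d) ℝ ℝ)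
  have := hs.map (T : Matrix (Fin d) (Fin d) ℝ →+ ℝ) T.continuous
  simpa [T, Function.comp_def, Matrix.trace_smul, smul_eq_mul] using this

end notears_main

/-- NOTEARS characterization: `h(W) = tr(e^{W ∘ W}) - d = 0` iff the directed graph
with an edge `(i, j)` whenever `W i j ≠ 0` has no directed cycle. -/
theorem notears_characterization {d : ℕ} (W : Matrix (Fin d) (Fin d) ℝ) :
    (NormedSpace.exp (W ⊙ W)).trace - (d : ℝ) = 0 ↔
      ¬ ∃ (k : ℕ) (v : ℕ → Fin d), 0 < k ∧ v k = v 0 ∧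
        ∀ i < k, W (v i) (v (i + 1)) ≠ 0 := by
  set A := W ⊙ W with hAdef
  have hA : ∀ i j, 0 ≤ A i j := fun i j => by
    simp [hAdef, Matrix.hadamard]; exact mul_self_nonneg _
  have hAW : ∀ i j, A i j ≠ 0 ↔ W i j ≠ 0 := fun i j => by
    simp [hAdef, Matrix.hadamard, mul_self_ne_zero]
  set f : ℕ → ℝ := fun n => (n.factorial : ℝ)⁻¹ * (A ^ n).trace with hf
  have hfs : Summable f := notears_summable_trace A
  have hfnn : ∀ n, 0 ≤ f n := fun n => by
    apply mul_nonneg (by positivity)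
    exact Finset.sum_nonneg fun i _ => notears_pow_entry_nonneg A hA n i i
  have hf0 : f 0 = (d : ℝ) := by
    simp [hf, Matrix.trace_one]
  have key : (NormedSpace.exp A).trace - (d : ℝ) = ∑' n : ℕ, f (n + 1) := by
    rw [notears_trace_exp A, ← hf, Summable.tsum_eq_zero_add hfs, hf0]
    ring
  have hfs' : Summable (fun n => f (n + 1)) := (summable_nat_add_iff 1).mpr hfs
  rw [key]
  constructor
  · rintro hzero ⟨k, v, hk, hvk, hve⟩
    have hpos : 0 < (A ^ k) (v 0) (v 0) := by
      have := notears_path_pow_pos A hA k v (fun m hm => (hAW _ _).mpr (hve m hm))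
      rwa [hvk] at this
    have htr : 0 < (A ^ k).trace := by
      rw [Matrix.trace]
      refine Finset.sum_pos' (fun i _ => notears_pow_entry_nonneg A hA k i i) ?_
      exact ⟨v 0, Finset.mem_univ _, hpos⟩
    have hfk : 0 < f k := mul_pos (by positivity) htr
    have hle : f k ≤ ∑' n : ℕ, f (n + 1) := by
      obtain ⟨m, rfl⟩ := Nat.exists_eq_add_of_lt hk
      have := Summable.le_tsum hfs' m (fun n _ => hfnn (n + 1))
      simpa using this
    rw [hzero] at hle
    exact absurd (lt_of_lt_of_le hfk hle) (lt_irrefl 0)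
  · intro hnc
    have : ∀ n : ℕ, f (n + 1) = 0 := by
      intro n
      have htr : (A ^ (n + 1)).trace = 0 := by
        rw [Matrix.trace]
        refine Finset.sum_eq_zero fun i _ => ?_
        by_contra hne
        obtain ⟨v, hv0, hvk, hve⟩ := notears_pow_entry_ne_zero_path A (n + 1) i i hne
        exact hnc ⟨n + 1, v, Nat.succ_pos n, by rw [hv0, hvk],
          fun m hm => (hAW _ _).mp (hve m hm)⟩
      simp [hf, htr]
    simp [this]
end

section
/- Let A be the adjacency matrix of a directed acyclic graph on d vertices (A ∈ {0,1}^{d×d} with no directed cycles). Then tr(e^{A}) = d, and for any real d×d matrices W and H, d/dt|_{t=0} tr(e^{(W+tH)∘(W+tH)}) = ∑_{i,j} 2 (e^{W∘W})ᵀ_{ij} W_{ij} H_{ij}, i.e. ∇_W tr(e^{W∘W}) = 2 (e^{W∘W})ᵀ ∘ W; in particular ∇_W tr(e^{W∘W})|_{W=A} = 2 (e^{A∘A})ᵀ ∘ A. -/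
open Matrix
open NormedSpace Finset Nat

section Aux
attribute [local instance] Matrix.linftyOpNormedAddCommGroup Matrix.linftyOpNormedSpace
  Matrix.linftyOpNormedRing Matrix.linftyOpNormedAlgebra

variable {d : ℕ}

noncomputable def trCLM (d : ℕ) : Matrix (Fin d) (Fin d) ℝ →L[ℝ] ℝ :=
  LinearMap.toContinuousLinearMap (Matrix.traceLinearMap (Fin d) ℝ ℝ)

@[simp] lemma trCLM_apply (X : Matrix (Fin d) (Fin d) ℝ) : trCLM d X = X.trace := rfl

lemma abs_entry_le_norm (X : Matrix (Fin d) (Fin d) ℝ) (i j : Fin d) : |X i j| ≤ ‖X‖ := by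
  rw [Matrix.linfty_opNorm_def]
  calc |X i j| = ‖X i j‖ := rfl
    _ ≤ ∑ k, ‖X i k‖ := Finset.single_le_sum (fun _ _ => norm_nonneg _) (Finset.mem_univ j)
    _ ≤ _ := by
        have := Finset.le_sup (f := fun i => ∑ j, ‖X i j‖₊) (Finset.mem_univ i)
        have h2 : ((∑ j, ‖X i j‖₊ : NNReal) : ℝ) ≤ ((univ.sup fun i => ∑ j, ‖X i j‖₊ : NNReal) : ℝ) := by exact_mod_cast this
        simpa [NNReal.coe_sum] using h2

lemma abs_trace_le (X : Matrix (Fin d) (Fin d) ℝ) : |X.trace| ≤ (d : ℝ) * ‖X‖ := by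
  calc |X.trace| ≤ ∑ i, |X i i| := by
        simpa [Matrix.trace, Matrix.diag] using Finset.abs_sum_le_sum_abs (fun i : Fin d => X i i) Finset.univ
    _ ≤ ∑ _i : Fin d, ‖X‖ := Finset.sum_le_sum fun i _ => abs_entry_le_norm X i i
    _ = (d : ℝ) * ‖X‖ := by simp [mul_comm]

lemma hasDerivAt_pow_comp {M : ℝ → Matrix (Fin d) (Fin d) ℝ} {M' : Matrix (Fin d) (Fin d) ℝ}
    {t : ℝ} (hM : HasDerivAt M M' t) (n : ℕ) :
    HasDerivAt (fun s => M s ^ n)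
      (∑ k ∈ Finset.range n, M t ^ k * M' * M t ^ (n - 1 - k)) t := by
  induction n with
  | zero =>
    simp only [pow_zero, Finset.range_zero, Finset.sum_empty]
    exact hasDerivAt_const t _
  | succ n ih =>
      have h := hM.mul ih
      have heq : (M * fun s => M s ^ n) = fun s => M s ^ (n + 1) := by
        funext s; rw [Pi.mul_apply, _root_.pow_succ']
      rw [heq] at h
      refine h.congr_deriv ?_
      symm
      rw [Finset.sum_range_succ']
      simp only [pow_zero, one_mul, Nat.add_sub_cancel, Nat.sub_zero]
      rw [Finset.mul_sum, add_comm]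
      congr 1
      · apply Finset.sum_congr rfl
        intro k hk
        rw [Finset.mem_range] at hk
        rw [show n - (k + 1) = n - 1 - k from by omega, _root_.pow_succ']
        noncomm_ring

lemma trace_cyclic_sum (M M' : Matrix (Fin d) (Fin d) ℝ) (n : ℕ) :
    (∑ k ∈ Finset.range n, M ^ k * M' * M ^ (n - 1 - k)).trace
      = n * (M ^ (n - 1) * M').trace := by
  rw [Matrix.trace_sum]
  have h : ∀ k ∈ Finset.range n,
      (M ^ k * M' * M ^ (n - 1 - k)).trace = (M ^ (n - 1) * M').trace := by
    intro k hk
    rw [Finset.mem_range] at hk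
    rw [Matrix.trace_mul_comm, ← mul_assoc, ← pow_add,
      show n - 1 - k + k = n - 1 from by omega]
  rw [Finset.sum_congr rfl h, Finset.sum_const, Finset.card_range, nsmul_eq_mul]

lemma norm_pow_mul_le (X Y : Matrix (Fin d) (Fin d) ℝ) (m : ℕ) :
    ‖X ^ m * Y‖ ≤ ‖X‖ ^ m * ‖Y‖ := by
  induction m with
  | zero => simp
  | succ m ih =>
      rw [_root_.pow_succ', mul_assoc]
      calc ‖X * (X ^ m * Y)‖ ≤ ‖X‖ * ‖X ^ m * Y‖ := norm_mul_le _ _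
        _ ≤ ‖X‖ * (‖X‖ ^ m * ‖Y‖) := by
            exact mul_le_mul_of_nonneg_left ih (norm_nonneg _)
        _ = ‖X‖ ^ (m + 1) * ‖Y‖ := by ring

lemma trace_exp_eq (X : Matrix (Fin d) (Fin d) ℝ) :
    (NormedSpace.exp X).trace = ∑' (n : ℕ), ((n ! : ℝ))⁻¹ * (X ^ n).trace := by
  rw [NormedSpace.exp_eq_tsum (𝕂 := ℝ)]
  have := (trCLM d).map_tsum (NormedSpace.expSeries_summable' (𝕂 := ℝ) X)
  simpa [Matrix.trace_smul, smul_eq_mul] using this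

noncomputable def trMulCLM (K : Matrix (Fin d) (Fin d) ℝ) :
    Matrix (Fin d) (Fin d) ℝ →L[ℝ] ℝ :=
  LinearMap.toContinuousLinearMap
    { toFun := fun Y => (Y * K).trace
      map_add' := fun a b => by simp [add_mul]
      map_smul' := fun c a => by simp [smul_mul_assoc] }

@[simp] lemma trMulCLM_apply (K X : Matrix (Fin d) (Fin d) ℝ) :
    trMulCLM K X = (X * K).trace := rfl

lemma trace_mul_exp_eq (X K : Matrix (Fin d) (Fin d) ℝ) :
    (NormedSpace.exp X * K).trace = ∑' (n : ℕ), ((n ! : ℝ))⁻¹ * (X ^ n * K).trace := by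
  rw [NormedSpace.exp_eq_tsum (𝕂 := ℝ)]
  have := (trMulCLM K).map_tsum (NormedSpace.expSeries_summable' (𝕂 := ℝ) X)
  simpa [smul_mul_assoc, Matrix.trace_smul, smul_eq_mul] using this


lemma final_trace (E W H : Matrix (Fin d) (Fin d) ℝ) :
    (E * (W ⊙ H + H ⊙ W)).trace = ∑ i, ∑ j, 2 * Eᵀ i j * W i j * H i j := by
  simp only [Matrix.trace, Matrix.diag, Matrix.mul_apply, Matrix.add_apply,
    Matrix.hadamard_apply, Matrix.transpose_apply]
  rw [Finset.sum_comm]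
  refine Finset.sum_congr rfl fun i _ => Finset.sum_congr rfl fun j _ => ?_
  ring

lemma main_deriv (W H : Matrix (Fin d) (Fin d) ℝ) :
    HasDerivAt (fun t : ℝ => (NormedSpace.exp ((W + t • H) ⊙ (W + t • H))).trace)
      (∑ i, ∑ j, 2 * (NormedSpace.exp (W ⊙ W))ᵀ i j * W i j * H i j) 0 := by
  set P : Matrix (Fin d) (Fin d) ℝ := W ⊙ W with hP
  set Q : Matrix (Fin d) (Fin d) ℝ := W ⊙ H + H ⊙ W with hQ
  set R : Matrix (Fin d) (Fin d) ℝ := H ⊙ H with hR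
  set M : ℝ → Matrix (Fin d) (Fin d) ℝ := fun t => P + t • Q + (t * t) • R with hM
  have hMfun : ∀ t : ℝ, (W + t • H) ⊙ (W + t • H) = M t := by
    intro t
    ext i j
    simp [hM, hP, hQ, hR, Matrix.hadamard_apply, Matrix.add_apply, Matrix.smul_apply,
      smul_eq_mul]
    ring
  set M' : ℝ → Matrix (Fin d) (Fin d) ℝ := fun t => Q + (t + t) • R with hM'
  have hMd : ∀ t : ℝ, HasDerivAt M (M' t) t := by
    intro t
    have h1 : HasDerivAt (fun s : ℝ => P + s • Q + (s * s) • R)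
        (0 + (1 : ℝ) • Q + (1 * t + t * 1) • R) t := by
      exact ((hasDerivAt_const t P).add ((hasDerivAt_id t).smul_const Q)).add
        (((hasDerivAt_id t).mul (hasDerivAt_id t)).smul_const R)
    have h2 : (0 : Matrix (Fin d) (Fin d) ℝ) + (1 : ℝ) • Q + (1 * t + t * 1) • R = M' t := by
      simp [hM']
    rw [h2] at h1
    exact h1
  set g : ℕ → ℝ → ℝ := fun n t => ((n ! : ℝ))⁻¹ * ((M t) ^ n).trace with hg
  set g' : ℕ → ℝ → ℝ := fun n t => ((n ! : ℝ))⁻¹ * (n * ((M t) ^ (n - 1) * M' t).trace)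
    with hg'
  have hgd : ∀ (n : ℕ) (y : ℝ), HasDerivAt (g n) (g' n y) y := by
    intro n y
    have h1 : HasDerivAt (fun s => (M s) ^ n)
        (∑ k ∈ Finset.range n, M y ^ k * M' y * M y ^ (n - 1 - k)) y :=
      hasDerivAt_pow_comp (hMd y) n
    have h2 := (trCLM d).hasFDerivAt.comp_hasDerivAt y h1
    simp only [Function.comp_def, trCLM_apply] at h2
    change HasDerivAt (fun x => (M x ^ n).trace)
      (Matrix.trace (∑ k ∈ Finset.range n, M y ^ k * M' y * M y ^ (n - 1 - k))) y at h2
    rw [trace_cyclic_sum] at h2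
    exact h2.const_mul _
  set C : ℝ := ‖P‖ + ‖Q‖ + ‖R‖ with hC
  set D : ℝ := ‖Q‖ + 2 * ‖R‖ with hD
  have hC0 : 0 ≤ C := by positivity
  have hD0 : 0 ≤ D := by positivity
  have hMb : ∀ y : ℝ, y ∈ Metric.ball (0 : ℝ) 1 → ‖M y‖ ≤ C := by
    intro y hy
    have hy1 : |y| ≤ 1 := by
      rw [Metric.mem_ball, Real.dist_eq, sub_zero] at hy
      exact le_of_lt hy
    calc ‖M y‖ ≤ ‖P + y • Q‖ + ‖(y * y) • R‖ := norm_add_le _ _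
      _ ≤ ‖P‖ + ‖y • Q‖ + ‖(y * y) • R‖ := by
          exact add_le_add_left (norm_add_le _ _) _
      _ ≤ ‖P‖ + ‖Q‖ + ‖R‖ := by
          gcongr
          · rw [norm_smul]
            calc ‖y‖ * ‖Q‖ ≤ 1 * ‖Q‖ := by gcongr; exact hy1
              _ = ‖Q‖ := one_mul _
          · rw [norm_smul]
            calc ‖y * y‖ * ‖R‖ ≤ 1 * ‖R‖ := by
                  gcongr
                  rw [norm_mul]
                  exact mul_le_one₀ hy1 (abs_nonneg _) hy1
              _ = ‖R‖ := one_mul _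
  have hM'b : ∀ y : ℝ, y ∈ Metric.ball (0 : ℝ) 1 → ‖M' y‖ ≤ D := by
    intro y hy
    have hy1 : |y| ≤ 1 := by
      rw [Metric.mem_ball, Real.dist_eq, sub_zero] at hy
      exact le_of_lt hy
    calc ‖M' y‖ ≤ ‖Q‖ + ‖(y + y) • R‖ := norm_add_le _ _
      _ ≤ ‖Q‖ + 2 * ‖R‖ := by
          gcongr
          rw [norm_smul]
          have : ‖y + y‖ ≤ 2 := by
            calc ‖y + y‖ ≤ ‖y‖ + ‖y‖ := norm_add_le _ _
              _ ≤ 1 + 1 := add_le_add hy1 hy1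
              _ = 2 := by norm_num
          calc ‖y + y‖ * ‖R‖ ≤ 2 * ‖R‖ := by gcongr
            _ = 2 * ‖R‖ := rfl
  set u : ℕ → ℝ := fun n => (n : ℝ) * ((n ! : ℝ))⁻¹ * ((d : ℝ) * (C ^ (n - 1) * D)) with hu
  have huS : Summable u := by
    rw [← summable_nat_add_iff 1]
    have heq : (fun m : ℕ => u (m + 1))
        = fun m : ℕ => ((d : ℝ) * D) * (C ^ m / (m ! : ℝ)) := by
      funext m
      have h1 : ((m + 1 : ℕ) : ℝ) ≠ 0 := by positivity
      simp only [hu, Nat.add_sub_cancel, Nat.factorial_succ]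
      push_cast
      field_simp
    rw [heq]
    exact (Real.summable_pow_div_factorial C).mul_left _
  have hg'b : ∀ (n : ℕ) (y : ℝ), y ∈ Metric.ball (0 : ℝ) 1 → ‖g' n y‖ ≤ u n := by
    intro n y hy
    have h1 : |((M y) ^ (n - 1) * M' y).trace| ≤ (d : ℝ) * (C ^ (n - 1) * D) := by
      calc |((M y) ^ (n - 1) * M' y).trace| ≤ (d : ℝ) * ‖(M y) ^ (n - 1) * M' y‖ :=
            abs_trace_le _
        _ ≤ (d : ℝ) * (C ^ (n - 1) * D) := by
            gcongr
            calc ‖(M y) ^ (n - 1) * M' y‖ ≤ ‖M y‖ ^ (n - 1) * ‖M' y‖ := norm_pow_mul_le _ _ _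
              _ ≤ C ^ (n - 1) * D :=
                  mul_le_mul (pow_le_pow_left₀ (norm_nonneg _) (hMb y hy) _)
                    (hM'b y hy) (norm_nonneg _) (by positivity)
    have h2 : 0 ≤ (d : ℝ) * (C ^ (n - 1) * D) := by positivity
    calc ‖g' n y‖ = ((n ! : ℝ))⁻¹ * ((n : ℝ) * |((M y) ^ (n - 1) * M' y).trace|) := by
          simp [hg', Real.norm_eq_abs, abs_mul, abs_of_nonneg, Nat.cast_nonneg,
            abs_of_nonneg (inv_nonneg.mpr (le_of_lt (by positivity : (0:ℝ) < (n ! : ℝ))))]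
      _ ≤ ((n ! : ℝ))⁻¹ * ((n : ℝ) * ((d : ℝ) * (C ^ (n - 1) * D))) := by
          gcongr
      _ = u n := by rw [hu]; ring
  have hg0S : Summable fun n => g n 0 := by
    have h1 := (NormedSpace.expSeries_summable' (𝕂 := ℝ) (M 0)).map (trCLM d)
      (trCLM d).continuous
    have h2 : (fun n : ℕ => trCLM d (((n ! : ℝ))⁻¹ • (M 0) ^ n)) = fun n => g n 0 := by
      funext n
      simp [hg, Matrix.trace_smul, smul_eq_mul]
    simp only [Function.comp_def] at h1
    rwa [h2] at h1
  have key := hasDerivAt_tsum_of_isPreconnected huS Metric.isOpen_ball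
    (convex_ball (0 : ℝ) 1).isPreconnected (fun n y _ => hgd n y) hg'b
    (Metric.mem_ball_self one_pos) hg0S (Metric.mem_ball_self one_pos)
  have hfun : (fun t : ℝ => (NormedSpace.exp ((W + t • H) ⊙ (W + t • H))).trace)
      = fun z : ℝ => ∑' n : ℕ, g n z := by
    funext z
    rw [hMfun z, trace_exp_eq]
  have hM0 : M 0 = P := by simp [hM]
  have hM'0 : M' 0 = Q := by simp [hM']
  have hval : (∑' n : ℕ, g' n 0)
      = ∑ i, ∑ j, 2 * (NormedSpace.exp (W ⊙ W))ᵀ i j * W i j * H i j := by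
    have hS : Summable fun n => g' n 0 :=
      Summable.of_norm_bounded huS fun n => hg'b n 0 (Metric.mem_ball_self one_pos)
    rw [Summable.tsum_eq_zero_add hS]
    have h0 : g' 0 0 = 0 := by simp [hg']
    have hsucc : (fun m : ℕ => g' (m + 1) 0)
        = fun m : ℕ => ((m ! : ℝ))⁻¹ * (P ^ m * Q).trace := by
      funext m
      have h1 : ((m ! : ℝ)) ≠ 0 := by positivity
      simp only [hg', hM0, hM'0, Nat.add_sub_cancel, Nat.factorial_succ]
      push_cast
      field_simp
    rw [h0, zero_add, hsucc, ← trace_mul_exp_eq, hP, final_trace]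
  rw [hfun, ← hval]
  exact key


lemma trace_exp_dag (A : Matrix (Fin d) (Fin d) ℝ)
    (hacyc : ∀ (i : Fin d) (k : ℕ), 1 ≤ k → (A ^ k) i i = 0) :
    (NormedSpace.exp A).trace = (d : ℝ) := by
  rw [trace_exp_eq, tsum_eq_single 0]
  · simp [Matrix.trace_one]
  · intro n hn
    have h1 : (A ^ n).trace = 0 := by
      simp only [Matrix.trace, Matrix.diag]
      exact Finset.sum_eq_zero fun i _ => hacyc i n (Nat.one_le_iff_ne_zero.mpr hn)
    rw [h1, mul_zero]

end Aux


/-- For a DAG adjacency matrix `A`, `tr(e^A) = d`; moreover, for any `W`, the map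
`W ↦ tr(e^{W ∘ W})` has directional derivative at `W` in direction `H` equal to
`∑ i j, 2 * (e^{W ∘ W})ᵀ i j * W i j * H i j`. -/
theorem dag_trace_exp_and_gradient {d : ℕ} (A : Matrix (Fin d) (Fin d) ℝ)
    (hA01 : ∀ i j, A i j = 0 ∨ A i j = 1)
    (hacyc : ∀ (i : Fin d) (k : ℕ), 1 ≤ k → (A ^ k) i i = 0) :
    (NormedSpace.exp A).trace = (d : ℝ) ∧
      ∀ W H : Matrix (Fin d) (Fin d) ℝ,
        HasDerivAt
          (fun t : ℝ => (NormedSpace.exp ((W + t • H) ⊙ (W + t • H))).trace)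
          (∑ i, ∑ j, 2 * (NormedSpace.exp (W ⊙ W))ᵀ i j * W i j * H i j) 0 := by
  exact ⟨trace_exp_dag A hacyc, fun W H => main_deriv W H⟩
end
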